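/- If p is a real polynomial satisfying (p(x))³ = 1 + 3x + x² · p(x+2) for all real x, then p has degree 1. -/
import Mathlib

open Polynomial

theorem poly_solution_of_cubic_functional_equation_degree_one (p : Polynomial ℝ)
    (h : ∀ x : ℝ, (p.eval x) ^ 3 = 1 + 3 * x + x ^ 2 * p.eval (x + 2)) :
    p.degree = 1 := by
  have hp0 : p ≠ 0 := by
    intro h0
    have := h 0
    simp [h0] at this
  by_cases hdeg : p.natDegree = 0
  · exfalso
    obtain ⟨c, rfl⟩ := Polynomial.natDegree_eq_zero.mp hdeg
    have h1 := h 1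
    have h2 := h (-1)
    simp at h1 h2
    nlinarith [h1, h2]
  · have hpoly : p ^ 3 = 1 + 3 * Polynomial.X +
        Polynomial.X ^ 2 * (p.comp (Polynomial.X + Polynomial.C 2)) := by
      apply Polynomial.funext
      intro x
      simp [Polynomial.eval_comp, h x]
    have hn1 : 1 ≤ p.natDegree := Nat.one_le_iff_ne_zero.mpr hdeg
    have hcomp : (p.comp (Polynomial.X + Polynomial.C 2)).natDegree = p.natDegree := by
      rw [Polynomial.natDegree_comp]; simp
    have hcomp0 : p.comp (Polynomial.X + Polynomial.C 2) ≠ 0 := by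
      intro h0
      rw [h0, Polynomial.natDegree_zero] at hcomp
      omega
    have hB : (Polynomial.X ^ 2 * p.comp (Polynomial.X + Polynomial.C 2)).natDegree
        = 2 + p.natDegree := by
      rw [Polynomial.natDegree_mul (pow_ne_zero 2 Polynomial.X_ne_zero) hcomp0, Polynomial.natDegree_X_pow, hcomp]
    have hA : (1 + 3 * Polynomial.X : Polynomial ℝ).natDegree ≤ 1 := by
      compute_degree
    have hR : (1 + 3 * Polynomial.X +
        Polynomial.X ^ 2 * p.comp (Polynomial.X + Polynomial.C 2)).natDegree
        = 2 + p.natDegree := by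
      rw [Polynomial.natDegree_add_eq_right_of_natDegree_lt, hB]
      rw [hB]; omega
    have hL : (p ^ 3).natDegree = 3 * p.natDegree := by
      simp [Polynomial.natDegree_pow]
    rw [hpoly, hR] at hL
    have hn : p.natDegree = 1 := by omega
    rw [Polynomial.degree_eq_natDegree hp0, hn]
    rfl
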